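/- Let E be a finite-dimensional real inner product space, let L > 0, let ℓ : E → ℝ be a convex differentiable function whose gradient is Lipschitz continuous with constant L, let R : E → ℝ be a convex continuous function, and set f = ℓ + R. Let x̂ ∈ E be a global minimizer of f. Define t_1 = 1 and t_{k+1} = (1 + √(1 + 4 t_k²))/2. Let x_0 ∈ E, set x̃_1 = x_0 and x_{−1} := x_0 (so that the first momentum step is trivial), and for each k ≥ 1 let x_k ∈ E be a global minimizer of z ↦ ⟨∇ℓ(x̃_k), z − x̃_k⟩ + (L/2)·‖z − x̃_k‖² + R(z), and define x̃_{k+1} = x_k + ((t_k − 1)/t_{k+1})·(x_k − x_{k−1}). Then for every k ≥ 1, f(x_k) − f(x̂) ≤ 2·L·‖x_0 − x̂‖² / (k+1)². -/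

import Mathlib

open RealInnerProductSpace

section FistaAux

variable {E : Type*} [NormedAddCommGroup E] [InnerProductSpace ℝ E] [FiniteDimensional ℝ E]

private lemma fista_aux_line (ℓ : E → ℝ) (hℓdiff : Differentiable ℝ ℓ) (v d : E) (s : ℝ) :
    HasDerivAt (fun s : ℝ => ℓ (v + s • d)) ⟪gradient ℓ (v + s • d), d⟫ s := by
  have h1 : HasDerivAt (fun s : ℝ => v + s • d) d s := by
    simpa using ((hasDerivAt_id s).smul_const d).const_add v
  have h3 := ((hℓdiff (v + s • d)).hasGradientAt.hasFDerivAt).comp_hasDerivAt s h1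
  exact h3

private lemma fista_aux_convex_grad (ℓ : E → ℝ) (hℓconv : ConvexOn ℝ Set.univ ℓ)
    (hℓdiff : Differentiable ℝ ℓ) (y z : E) :
    ℓ y + ⟪gradient ℓ y, z - y⟫ ≤ ℓ z := by
  set d := z - y with hd
  have hder : HasDerivAt (fun s : ℝ => ℓ (y + s • d)) ⟪gradient ℓ y, d⟫ 0 := by
    simpa using fista_aux_line ℓ hℓdiff y d 0
  have hslope := hasDerivAt_iff_tendsto_slope.mp hder
  have hmono : Filter.Tendsto (slope (fun s : ℝ => ℓ (y + s • d)) 0) (nhdsWithin 0 (Set.Ioi 0))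
      (nhds ⟪gradient ℓ y, d⟫) :=
    hslope.mono_left (nhdsWithin_mono 0 (fun a ha => Set.mem_compl_singleton_iff.mpr (ne_of_gt ha)))
  have hbound : ∀ᶠ s in nhdsWithin (0:ℝ) (Set.Ioi 0),
      slope (fun s : ℝ => ℓ (y + s • d)) 0 s ≤ ℓ z - ℓ y := by
    filter_upwards [Ioo_mem_nhdsGT_of_mem (Set.mem_Ico.mpr ⟨le_refl (0:ℝ), one_pos⟩)] with s hs
    obtain ⟨hs0, hs1⟩ := hs
    have hcomb : ℓ (y + s • d) ≤ (1 - s) * ℓ y + s * ℓ z := by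
      have hyz : y + s • d = (1 - s) • y + s • z := by rw [hd]; module
      rw [hyz]
      exact hℓconv.2 (Set.mem_univ y) (Set.mem_univ z) (by linarith) (le_of_lt hs0) (by ring)
    rw [slope_def_field]
    have : (ℓ (y + s • d) - ℓ (y + (0:ℝ) • d)) / (s - 0) ≤ ℓ z - ℓ y := by
      rw [sub_zero, div_le_iff₀ hs0]
      simp only [zero_smul, add_zero]
      nlinarith
    simpa [div_sub_div_same] using this
  have hle := le_of_tendsto hmono hbound
  linarith

private lemma fista_aux_descent (L : ℝ) (ℓ : E → ℝ) (hℓdiff : Differentiable ℝ ℓ)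
    (hlip : ∀ x y : E, ‖gradient ℓ x - gradient ℓ y‖ ≤ L * ‖x - y‖) (v w : E) :
    ℓ w ≤ ℓ v + ⟪gradient ℓ v, w - v⟫ + L / 2 * ‖w - v‖ ^ 2 := by
  set d := w - v with hd
  set c : ℝ := ⟪gradient ℓ v, d⟫ with hc
  set h : ℝ → ℝ := fun s => ℓ (v + s • d) - s * c - L * ‖d‖ ^ 2 / 2 * s ^ 2 with hh
  have hder : ∀ s : ℝ, HasDerivAt h (⟪gradient ℓ (v + s • d), d⟫ - c - L * ‖d‖ ^ 2 * s) s := by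
    intro s
    have h1 := fista_aux_line ℓ hℓdiff v d s
    have h2 : HasDerivAt (fun s : ℝ => s * c) c s := by simpa using (hasDerivAt_id s).mul_const c
    have h3 : HasDerivAt (fun s : ℝ => L * ‖d‖ ^ 2 / 2 * s ^ 2) (L * ‖d‖ ^ 2 * s) s := by
      have := (hasDerivAt_pow 2 s).const_mul (L * ‖d‖ ^ 2 / 2)
      exact this.congr_deriv (by push_cast; ring)
    exact (h1.sub h2).sub h3
  have hanti : AntitoneOn h (Set.Icc 0 1) := by
    apply antitoneOn_of_deriv_nonpos (convex_Icc 0 1)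
    · exact Continuous.continuousOn (by
        have : Continuous fun s : ℝ => ℓ (v + s • d) :=
          hℓdiff.continuous.comp (by continuity)
        exact (this.sub (continuous_id.mul continuous_const)).sub
          (continuous_const.mul (continuous_id.pow 2)))
    · intro s _
      exact ((hder s).differentiableAt).differentiableWithinAt
    · intro s hs
      rw [interior_Icc] at hs
      rw [(hder s).deriv]
      have hlips := hlip (v + s • d) v
      have hinner : ⟪gradient ℓ (v + s • d) - gradient ℓ v, d⟫
          ≤ ‖gradient ℓ (v + s • d) - gradient ℓ v‖ * ‖d‖ := real_inner_le_norm _ _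
      have hnorm : ‖(v + s • d) - v‖ = s * ‖d‖ := by
        simp [norm_smul, abs_of_pos hs.1]
      rw [inner_sub_left] at hinner
      have := hlips.trans_eq (by rw [hnorm])
      nlinarith [norm_nonneg d, norm_nonneg (gradient ℓ (v + s • d) - gradient ℓ v)]
  have h10 : h 1 ≤ h 0 := hanti (Set.mem_Icc.mpr ⟨le_refl 0, zero_le_one⟩)
    (Set.mem_Icc.mpr ⟨zero_le_one, le_refl 1⟩) zero_le_one
  simp only [hh, one_smul, zero_smul, add_zero, one_pow, mul_one, zero_mul, mul_zero,
    zero_pow, sub_zero] at h10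
  have hvw : v + d = w := by rw [hd]; abel
  rw [hvw] at h10
  linarith

private lemma fista_aux_combo (a b : E) (θ : ℝ) :
    ‖(1 - θ) • a + θ • b‖ ^ 2
      = (1 - θ) * ‖a‖ ^ 2 + θ * ‖b‖ ^ 2 - θ * (1 - θ) * ‖a - b‖ ^ 2 := by
  have e : ∀ u : E, ‖u‖ ^ 2 = ⟪u, u⟫ := fun u => (real_inner_self_eq_norm_sq u).symm
  simp only [e, inner_add_left, inner_add_right, inner_sub_left, inner_sub_right,
    real_inner_smul_left, real_inner_smul_right, real_inner_comm b a]
  ring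

private lemma fista_aux_identity (T : ℝ) (y p c s : E) :
    T * ((T - 1) * (‖c - y‖ ^ 2 - ‖c - p‖ ^ 2) + (‖s - y‖ ^ 2 - ‖s - p‖ ^ 2))
      = ‖T • y - (T - 1) • c - s‖ ^ 2 - ‖T • p - (T - 1) • c - s‖ ^ 2 := by
  have e : ∀ u : E, ‖u‖ ^ 2 = ⟪u, u⟫ := fun u => (real_inner_self_eq_norm_sq u).symm
  simp only [e, inner_add_left, inner_add_right, inner_sub_left, inner_sub_right,
    real_inner_smul_left, real_inner_smul_right, real_inner_comm y c, real_inner_comm p c,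
    real_inner_comm y s, real_inner_comm p s, real_inner_comm c s, real_inner_comm p y]
  ring

end FistaAux

set_option maxHeartbeats 1000000 in
/-- Theorem 2 of the paper: the O(1/k²) convergence rate of the FISTA-type
accelerated proximal gradient method. Here `ℓ` is convex differentiable with
`L`-Lipschitz gradient, `R` is convex continuous, `f = ℓ + R`, `x̂` is a global
minimizer of `f`, the iterates `x_k` solve the proximal subproblem at the
momentum points `x̃_k`, and `t_k` is the FISTA step-size sequence. -/
theorem fista_convergence_rate {E : Type*} [NormedAddCommGroup E]
    [InnerProductSpace ℝ E] [FiniteDimensional ℝ E]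
    (L : ℝ) (hL : 0 < L) (ℓ R : E → ℝ)
    (hℓconv : ConvexOn ℝ Set.univ ℓ) (hℓdiff : Differentiable ℝ ℓ)
    (hlip : ∀ x y : E, ‖gradient ℓ x - gradient ℓ y‖ ≤ L * ‖x - y‖)
    (hRconv : ConvexOn ℝ Set.univ R) (hRcont : Continuous R)
    (f : E → ℝ) (hf : f = fun x => ℓ x + R x)
    (xhat : E) (hxhat : ∀ z, f xhat ≤ f z)
    (t : ℕ → ℝ) (ht1 : t 1 = 1)
    (htrec : ∀ k, 1 ≤ k → t (k + 1) = (1 + Real.sqrt (1 + 4 * t k ^ 2)) / 2)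
    (x xt : ℕ → E) (hxt1 : xt 1 = x 0)
    (hmin : ∀ k, 1 ≤ k → ∀ z : E,
      (inner ℝ (gradient ℓ (xt k)) (x k - xt k) : ℝ) + L / 2 * ‖x k - xt k‖ ^ 2
          + R (x k) ≤
        (inner ℝ (gradient ℓ (xt k)) (z - xt k) : ℝ) + L / 2 * ‖z - xt k‖ ^ 2 + R z)
    (hmom : ∀ k, 1 ≤ k →
      xt (k + 1) = x k + ((t k - 1) / t (k + 1)) • (x k - x (k - 1))) :
    ∀ k : ℕ, 1 ≤ k →
      f (x k) - f xhat ≤ 2 * L * ‖x 0 - xhat‖ ^ 2 / ((k : ℝ) + 1) ^ 2 := by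
  -- The key "sufficient decrease" inequality of FISTA
  have key : ∀ k, 1 ≤ k → ∀ z : E,
      f (x k) ≤ f z + L / 2 * (‖z - xt k‖ ^ 2 - ‖z - x k‖ ^ 2) := by
    intro k hk z
    set y := xt k with hy
    set g := gradient ℓ y with hg
    set m : E → ℝ := fun w => ⟪g, w - y⟫ + L / 2 * ‖w - y‖ ^ 2 + R w with hm
    have hminm : ∀ w, m (x k) ≤ m w := by
      intro w; simp only [hm]; exact hmin k hk w
    -- strong convexity of the subproblem + minimality
    have hstrong : m (x k) + L / 2 * ‖z - x k‖ ^ 2 ≤ m z := by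
      have hθ : ∀ θ : ℝ, 0 < θ → θ ≤ 1 →
          m (x k) + L / 2 * ‖z - x k‖ ^ 2 ≤ m z + θ * (L / 2 * ‖z - x k‖ ^ 2) := by
        intro θ hθ0 hθ1
        set w := (1 - θ) • x k + θ • z with hw
        have hR : R w ≤ (1 - θ) * R (x k) + θ * R z :=
          hRconv.2 (Set.mem_univ _) (Set.mem_univ _) (by linarith) (le_of_lt hθ0) (by ring)
        have hwy : w - y = (1 - θ) • (x k - y) + θ • (z - y) := by rw [hw]; module
        have hxz : (x k - y) - (z - y) = x k - z := by abel
        have hnorm : ‖w - y‖ ^ 2 = (1 - θ) * ‖x k - y‖ ^ 2 + θ * ‖z - y‖ ^ 2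
            - θ * (1 - θ) * ‖x k - z‖ ^ 2 := by
          rw [hwy, fista_aux_combo, hxz]
        have hinner : ⟪g, w - y⟫ = (1 - θ) * ⟪g, x k - y⟫ + θ * ⟪g, z - y⟫ := by
          rw [hwy, inner_add_right, real_inner_smul_right, real_inner_smul_right]
        have hmw : m w ≤ (1 - θ) * m (x k) + θ * m z
            - L / 2 * (θ * (1 - θ)) * ‖x k - z‖ ^ 2 := by
          simp only [hm]
          rw [hinner, hnorm]
          linarith [hR]
        have h1 : m (x k) ≤ (1 - θ) * m (x k) + θ * m z
            - L / 2 * (θ * (1 - θ)) * ‖x k - z‖ ^ 2 := (hminm w).trans hmw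
        rw [show ‖x k - z‖ = ‖z - x k‖ from norm_sub_rev _ _] at h1
        have h2 : θ * (m (x k) + L / 2 * ‖z - x k‖ ^ 2)
            ≤ θ * (m z + θ * (L / 2 * ‖z - x k‖ ^ 2)) := by nlinarith [h1]
        exact le_of_mul_le_mul_left h2 hθ0
      refine le_of_forall_pos_le_add ?_
      intro ε hε
      set c : ℝ := L / 2 * ‖z - x k‖ ^ 2 with hcc
      have hc0 : 0 ≤ c := by positivity
      rcases le_or_gt c ε with h | h
      · have := hθ 1 one_pos le_rfl
        linarith
      · have hcpos : 0 < c := hε.trans h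
        have hθ0 : 0 < ε / c := by positivity
        have hθ1 : ε / c ≤ 1 := by rw [div_le_one hcpos]; linarith
        have := hθ (ε / c) hθ0 hθ1
        rw [div_mul_cancel₀ _ (ne_of_gt hcpos)] at this
        linarith
    have hd := fista_aux_descent L ℓ hℓdiff hlip y (x k)
    have hu := fista_aux_convex_grad ℓ hℓconv hℓdiff y z
    simp only [hm] at hstrong
    simp only [hf]
    linarith
  -- lower bound on the step sizes
  have tlow : ∀ k : ℕ, 1 ≤ k → ((k : ℝ) + 1) / 2 ≤ t k := by
    intro k hk
    induction k, hk using Nat.le_induction with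
    | base => rw [ht1]; norm_num
    | succ n hn ih =>
      have h0 : 0 ≤ t n := by
        have : (0:ℝ) < ((n:ℝ) + 1) / 2 := by positivity
        linarith
      have hs : 2 * t n ≤ Real.sqrt (1 + 4 * t n ^ 2) := by
        rw [show 2 * t n = Real.sqrt ((2 * t n) ^ 2) from (Real.sqrt_sq (by linarith)).symm]
        exact Real.sqrt_le_sqrt (by nlinarith)
      rw [htrec n hn]
      push_cast
      linarith
  -- the recurrence identity for t
  have trec2 : ∀ k : ℕ, 1 ≤ k → t k ^ 2 = t (k + 1) ^ 2 - t (k + 1) := by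
    intro k hk
    have hsq : Real.sqrt (1 + 4 * t k ^ 2) ^ 2 = 1 + 4 * t k ^ 2 :=
      Real.sq_sqrt (by positivity)
    rw [htrec k hk]
    linear_combination (-1/4 : ℝ) * hsq
  set u : ℕ → E := fun k => t k • x k - (t k - 1) • x (k - 1) - xhat with hu
  -- the energy decrease
  have energy : ∀ k : ℕ, 1 ≤ k →
      t k ^ 2 * (f (x k) - f xhat) + L / 2 * ‖u k‖ ^ 2 ≤ L / 2 * ‖x 0 - xhat‖ ^ 2 := by
    intro k hk
    induction k, hk using Nat.le_induction with
    | base =>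
      have hb := key 1 le_rfl xhat
      rw [hxt1] at hb
      have hu1 : u 1 = x 1 - xhat := by
        simp only [hu, ht1]
        module
      rw [hu1, ht1]
      rw [show ‖xhat - x 0‖ = ‖x 0 - xhat‖ from norm_sub_rev _ _,
        show ‖xhat - x 1‖ = ‖x 1 - xhat‖ from norm_sub_rev _ _] at hb
      nlinarith [hb]
    | succ n hn ih =>
      have hn' : (1:ℝ) ≤ (n:ℝ) := by exact_mod_cast hn
      have hT := tlow (n + 1) (by omega)
      have hT1 : 1 ≤ t (n + 1) := by push_cast at hT; linarith
      have hT0 : t (n + 1) ≠ 0 := by linarith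
      have A := key (n + 1) (by omega) (x n)
      have B := key (n + 1) (by omega) xhat
      have hcancel : t (n + 1) * ((t n - 1) / t (n + 1)) = t n - 1 := by
        field_simp
      have huk : t (n + 1) • xt (n + 1) - (t (n + 1) - 1) • x n - xhat = u n := by
        rw [hmom n hn, smul_add, smul_smul, hcancel]
        simp only [hu]
        module
      have huk1 : u (n + 1) = t (n + 1) • x (n + 1) - (t (n + 1) - 1) • x n - xhat := by
        simp only [hu, Nat.add_sub_cancel]
      have hid := fista_aux_identity (t (n + 1)) (xt (n + 1)) (x (n + 1)) (x n) xhat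
      rw [huk, ← huk1] at hid
      have ht2 := trec2 n hn
      have hA' : t (n + 1) * (t (n + 1) - 1) * (f (x (n + 1)) - f xhat)
          ≤ t (n + 1) * (t (n + 1) - 1) * ((f (x n) - f xhat)
            + L / 2 * (‖x n - xt (n + 1)‖ ^ 2 - ‖x n - x (n + 1)‖ ^ 2)) := by
        apply mul_le_mul_of_nonneg_left _ (mul_nonneg (by linarith) (by linarith))
        linarith [A]
      have hB' : t (n + 1) * (f (x (n + 1)) - f xhat)
          ≤ t (n + 1) * (L / 2 * (‖xhat - xt (n + 1)‖ ^ 2 - ‖xhat - x (n + 1)‖ ^ 2)) := by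
        apply mul_le_mul_of_nonneg_left _ (by linarith)
        linarith [B]
      have hstep : t (n + 1) ^ 2 * (f (x (n + 1)) - f xhat) + L / 2 * ‖u (n + 1)‖ ^ 2
          ≤ t n ^ 2 * (f (x n) - f xhat) + L / 2 * ‖u n‖ ^ 2 := by
        have hexp : t (n + 1) ^ 2 * (f (x (n + 1)) - f xhat)
            = t (n + 1) * (t (n + 1) - 1) * (f (x (n + 1)) - f xhat)
              + t (n + 1) * (f (x (n + 1)) - f xhat) := by ring
        have hcomb : t (n + 1) * (t (n + 1) - 1) * ((f (x n) - f xhat)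
              + L / 2 * (‖x n - xt (n + 1)‖ ^ 2 - ‖x n - x (n + 1)‖ ^ 2))
            + t (n + 1) * (L / 2 * (‖xhat - xt (n + 1)‖ ^ 2 - ‖xhat - x (n + 1)‖ ^ 2))
            = (t (n + 1) ^ 2 - t (n + 1)) * (f (x n) - f xhat)
              + L / 2 * (t (n + 1) * ((t (n + 1) - 1)
                  * (‖x n - xt (n + 1)‖ ^ 2 - ‖x n - x (n + 1)‖ ^ 2)
                + (‖xhat - xt (n + 1)‖ ^ 2 - ‖xhat - x (n + 1)‖ ^ 2))) := by ring
        rw [hid] at hcomb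
        rw [← ht2] at hcomb
        linarith [hA', hB', hexp, hcomb]
      linarith [hstep, ih]
  -- conclusion
  intro k hk
  have he := energy k hk
  have hv : 0 ≤ f (x k) - f xhat := by linarith [hxhat (x k)]
  have htk := tlow k hk
  have hk1 : (1:ℝ) ≤ (k:ℝ) := by exact_mod_cast hk
  have hsq : ((k:ℝ) + 1) ^ 2 / 4 ≤ t k ^ 2 := by nlinarith
  have hnn : 0 ≤ L / 2 * ‖u k‖ ^ 2 := by positivity
  rw [le_div_iff₀ (by positivity : (0:ℝ) < ((k:ℝ) + 1) ^ 2)]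
  nlinarith [he, hsq, hv, hnn]
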